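/- Let G be a finite directed graph, s ≠ t two vertices, and u : Arcs → ℕ a function satisfying flow conservation with value K ≥ 1: for every vertex v, (outflow of v under u) − (inflow of v under u) equals K if v = s, −K if v = t, and 0 otherwise. Then there exists an arc a = (s, w) out of s with u(a) ≥ 1, and moreover there exists a directed path from s to t all of whose arcs a satisfy u(a) ≥ 1. -/

import Mathlib

lemma nodup_path_of_reflTransGen {V : Type*} (R : V → V → Prop) {a b : V}
    (h : Relation.ReflTransGen R a b) :
    ∃ l : List V, l ≠ [] ∧ l.head? = some a ∧ l.getLast? = some b ∧ l.Nodup ∧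
      l.Chain' R := by
  classical
  induction h using Relation.ReflTransGen.head_induction_on with
  | refl => exact ⟨[b], by simp, by simp, by simp, by simp, List.isChain_singleton b⟩
  | head hac _ ih =>
    rename_i x c _
    obtain ⟨l, hne, hh, hl, hnd, hch⟩ := ih
    by_cases hx : x ∈ l
    · obtain ⟨l1, l2, rfl⟩ := List.append_of_mem hx
      refine ⟨x :: l2, by simp, by simp, ?_, ?_, ?_⟩
      · have h2 : (x :: l2).getLast?.isSome := List.getLast?_isSome.2 (by simp)
        obtain ⟨y, hy⟩ := Option.isSome_iff_exists.1 h2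
        rw [List.getLast?_append, hy] at hl
        rw [hy]; simpa using hl
      · exact hnd.sublist (List.sublist_append_right l1 (x :: l2))
      · exact hch.suffix ⟨l1, rfl⟩
    · refine ⟨x :: l, by simp, by simp, ?_, List.nodup_cons.2 ⟨hx, hnd⟩, ?_⟩
      · rw [List.getLast?_cons, hl]
        cases l <;> simp_all
      · refine List.isChain_cons.2 ?_
        refine ⟨fun y hy => ?_, hch⟩
        rw [hh] at hy
        obtain rfl : c = y := by simpa using hy
        exact hac

theorem stmt11 {V : Type*} [Fintype V] [DecidableEq V] (A : Finset (V × V)) (s t : V)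
    (hst : s ≠ t) (u : V × V → ℕ) (K : ℕ) (hK : 1 ≤ K)
    (hflow : ∀ v : V,
      (∑ a ∈ A.filter (fun a => a.1 = v), (u a : ℤ)) -
        (∑ a ∈ A.filter (fun a => a.2 = v), (u a : ℤ)) =
      if v = s then (K : ℤ) else if v = t then -(K : ℤ) else 0) :
    (∃ w : V, (s, w) ∈ A ∧ 1 ≤ u (s, w)) ∧
    ∃ l : List V, l ≠ [] ∧ l.head? = some s ∧ l.getLast? = some t ∧ l.Nodup ∧
      l.Chain' (fun x y => (x, y) ∈ A ∧ 1 ≤ u (x, y)) := by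
  classical
  set R : V → V → Prop := fun x y => (x, y) ∈ A ∧ 1 ≤ u (x, y) with hR
  set S : Finset V := Finset.univ.filter (fun v => Relation.ReflTransGen R s v) with hSdef
  have hsS : s ∈ S := by
    simp only [hSdef, Finset.mem_filter, Finset.mem_univ, true_and]
    exact Relation.ReflTransGen.refl
  have hclosed : ∀ a ∈ A, a.1 ∈ S → 1 ≤ u a → a.2 ∈ S := by
    intro a ha h1 hu
    simp only [hSdef, Finset.mem_filter, Finset.mem_univ, true_and] at h1 ⊢
    exact h1.tail ⟨by simpa using ha, by simpa using hu⟩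
  have htS : t ∈ S := by
    by_contra htS
    -- sum fiberwise helper
    have key : ∀ (p : V × V → V),
        (∑ v ∈ S, ∑ a ∈ A.filter (fun a => p a = v), (u a : ℤ)) =
        ∑ a ∈ A.filter (fun a => p a ∈ S), (u a : ℤ) := by
      intro p
      rw [← Finset.sum_fiberwise_of_maps_to (g := p) (t := S)
        (fun a ha => (Finset.mem_filter.1 ha).2)]
      refine Finset.sum_congr rfl fun v hv => ?_
      refine Finset.sum_congr ?_ fun _ _ => rfl
      rw [Finset.filter_filter]
      refine Finset.filter_congr fun a _ => ?_
      have himp : p a = v → p a ∈ S := fun h' => h' ▸ hv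
      tauto
    have hsum : (∑ a ∈ A.filter (fun a => a.1 ∈ S), (u a : ℤ)) -
        (∑ a ∈ A.filter (fun a => a.2 ∈ S), (u a : ℤ)) = (K : ℤ) := by
      rw [← key (fun a => a.1), ← key (fun a => a.2), ← Finset.sum_sub_distrib]
      rw [Finset.sum_congr rfl (fun v _ => hflow v)]
      rw [Finset.sum_eq_single s]
      · simp
      · intro v hv hvs
        have hvt : v ≠ t := fun h => htS (h ▸ hv)
        simp [hvs, hvt]
      · intro h; exact absurd hsS h
    -- split sums
    have hsplit : ∀ (p q : V × V → V),
        (∑ a ∈ A.filter (fun a => p a ∈ S), (u a : ℤ)) =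
        (∑ a ∈ A.filter (fun a => p a ∈ S ∧ q a ∈ S), (u a : ℤ)) +
        (∑ a ∈ A.filter (fun a => p a ∈ S ∧ q a ∉ S), (u a : ℤ)) := by
      intro p q
      rw [← Finset.sum_filter_add_sum_filter_not (A.filter (fun a => p a ∈ S))
        (fun a => q a ∈ S)]
      congr 1 <;> rw [Finset.filter_filter]
    have hzero : (∑ a ∈ A.filter (fun a => a.1 ∈ S ∧ a.2 ∉ S), (u a : ℤ)) = 0 := by
      refine Finset.sum_eq_zero fun a ha => ?_
      obtain ⟨haA, h1, h2⟩ := Finset.mem_filter.1 ha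
      by_contra h
      exact h2 (hclosed a haA h1 (by omega))
    have hcomm : A.filter (fun a => a.2 ∈ S ∧ a.1 ∈ S) =
        A.filter (fun a => a.1 ∈ S ∧ a.2 ∈ S) := by
      refine Finset.filter_congr fun a _ => ?_; tauto
    rw [hsplit (fun a => a.1) (fun a => a.2), hsplit (fun a => a.2) (fun a => a.1),
      hzero, add_zero, hcomm] at hsum
    have hpos : (0 : ℤ) ≤ ∑ a ∈ A.filter (fun a => a.2 ∈ S ∧ a.1 ∉ S), (u a : ℤ) :=
      Finset.sum_nonneg fun a _ => by positivity
    omega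
  have hreach : Relation.ReflTransGen R s t := by
    simpa [hSdef] using htS
  obtain ⟨l, hne, hh, hl, hnd, hch⟩ := nodup_path_of_reflTransGen R hreach
  obtain ⟨x, rest, rfl⟩ := List.exists_cons_of_ne_nil hne
  have hx : x = s := by simpa using hh
  cases rest with
  | nil =>
    exfalso
    apply hst
    have hxt : x = t := by simpa using hl
    rw [← hx, hxt]
  | cons w rest' =>
    have hRsw : R x w := (List.isChain_cons_cons.1 hch).1
    rw [hx] at hRsw
    obtain ⟨h1, h2⟩ := hRsw
    exact ⟨⟨w, h1, h2⟩, x :: w :: rest', hne, hh, hl, hnd, hch⟩
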